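/- The reachability relation on words in List Bool is a partial order: it is reflexive and transitive, and if w₁ is reachable from w₀ and w₀ is reachable from w₁ then w₀ = w₁. -/
import Mathlib


/-- A single pawn move: a pawn (`true`) advances one square rightward into an
empty square (`false`). -/
def PawnMove (w₀ w₁ : List Bool) : Prop :=
  ∃ u v : List Bool, w₀ = u ++ [true, false] ++ v ∧ w₁ = u ++ [false, true] ++ v

/-- Reachability: the reflexive-transitive closure of the single-move relation. -/
def Reach : List Bool → List Bool → Prop :=
  Relation.ReflTransGen PawnMove

/-- The `ZMod 2` pairing `⟨w₀|w₁⟩`: `1` if `w₁` is reachable from `w₀`, else `0`. -/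
noncomputable def pairing (w₀ w₁ : List Bool) : ZMod 2 :=
  open Classical in if Reach w₀ w₁ then 1 else 0

/-- Sum of indices of `true` entries. -/
def pawnWeight : List Bool → ℕ
  | [] => 0
  | _ :: t => pawnWeight t + t.count true

lemma pawnMove_count {w₀ w₁ : List Bool} (h : PawnMove w₀ w₁) :
    w₀.count true = w₁.count true := by
  obtain ⟨u, v, rfl, rfl⟩ := h
  simp [List.count_append]

lemma pawnMove_weight {w₀ w₁ : List Bool} (h : PawnMove w₀ w₁) :
    pawnWeight w₀ + 1 = pawnWeight w₁ := by
  obtain ⟨u, v, rfl, rfl⟩ := h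
  induction u with
  | nil =>
      show pawnWeight (true :: false :: v) + 1 = pawnWeight (false :: true :: v)
      simp [pawnWeight, List.count_cons]
      omega
  | cons a u ih =>
      have hc : ((u ++ [true, false] ++ v).count true)
          = ((u ++ [false, true] ++ v).count true) := by
        simp [List.count_append]
      show pawnWeight (u ++ [true, false] ++ v)
            + (u ++ [true, false] ++ v).count true + 1
          = pawnWeight (u ++ [false, true] ++ v)
            + (u ++ [false, true] ++ v).count true
      omega

lemma reach_weight_le {w₀ w₁ : List Bool} (h : Reach w₀ w₁) :
    pawnWeight w₀ ≤ pawnWeight w₁ := by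
  induction h with
  | refl => exact le_refl _
  | tail _ hstep ih => have := pawnMove_weight hstep; omega

/-- The reachability relation on words is a partial order: reflexive,
transitive, and antisymmetric. -/
theorem reach_isPartialOrder :
    (∀ w : List Bool, Reach w w) ∧
    (∀ w₀ w₁ w₂ : List Bool, Reach w₀ w₁ → Reach w₁ w₂ → Reach w₀ w₂) ∧
    (∀ w₀ w₁ : List Bool, Reach w₀ w₁ → Reach w₁ w₀ → w₀ = w₁) := by
  refine ⟨fun w => Relation.ReflTransGen.refl,
    fun _ _ _ h h' => Relation.ReflTransGen.trans h h', fun w₀ w₁ h h' => ?_⟩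
  rcases Relation.ReflTransGen.cases_head h with rfl | ⟨c, hstep, hc⟩
  · rfl
  · have h1 := pawnMove_weight hstep
    have h2 := reach_weight_le hc
    have h3 := reach_weight_le h'
    omega
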